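/- Let c, c_φ, c_ψ, t, κ, d̄ ∈ ℝ with c_φ ≠ 0 and t·c_ψ = d̄·c_φ, let ρ ∈ ℝ satisfy ρ² = 1 - c²c_φ², set x = 1 - 2c²c_φ², and define the 2×2 real matrices C = [[x, -2c·c_φ·ρ], [-2c·c_φ·ρ, -x]], R = [[1, 0], [0, -1]], and Θ = 2c·(c_ψ/c_φ)·[[0, ρ], [0, -c·c_φ]]. Then in the equal-curvature case κ̃ = κ, trace( I + (C·R)² - 2tκ·(Θ + (C·R)·(Θ·R)) + t²·κ²·(Θ·R)² ) = ( 2x - 2κ·c²·c_φ·d̄ )² = ( trace(C·R + tκΘ) )²; i.e., the trace of dT²_ξ is the square of the trace of R·dT_ξ. -/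

import Mathlib

open Matrix

/-!
Put `M = C R`, `a = 2 c c_φ ρ` and `s = 2 c c_ψ / c_φ`. Then `M = [[x, a], [-a, x]]` with
`x² + a² = 1` (from `ρ² = 1 - c² c_φ²`), so `M` is a rotation, and `Θ` is upper triangular with
trace `-s c c_φ`. The three traces in the expression for `dT²` are `4x²`, `2 s c c_φ x` and
`(s c c_φ)²`, so it collapses to the square `(2x - tκ s c c_φ)²`, whose root is the trace of
`M + tκ Θ`. Finally `t c_ψ = d̄ c_φ` turns `tκ s c c_φ` into `2κ c² c_φ d̄`.
-/

lemma collision_mul_reflection (x a : ℝ) :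
    !![x, -a; -a, -x] * !![(1 : ℝ), 0; 0, -1] = !![x, a; -a, x] := by
  simp

section WavefrontMatrices

variable (c cφ ρ x s t κ : ℝ)

lemma sq_add_sq_collision_entries (hρ : ρ ^ 2 = 1 - c ^ 2 * cφ ^ 2)
    (hx : x = 1 - 2 * c ^ 2 * cφ ^ 2) :
    x ^ 2 + (2 * c * cφ * ρ) ^ 2 = 1 := by
  subst hx
  linear_combination 4 * c ^ 2 * cφ ^ 2 * hρ

lemma trace_collision_mul_reflection_add_smul :
    (!![x, -(2 * c * cφ * ρ); -(2 * c * cφ * ρ), -x] * !![1, 0; 0, -1]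
      + (t * κ) • (s • !![0, ρ; 0, -(c * cφ)])).trace = 2 * x - t * κ * s * (c * cφ) := by
  rw [collision_mul_reflection, trace_add, trace_smul, trace_smul, trace_fin_two_of,
    trace_fin_two_of, smul_eq_mul, smul_eq_mul]
  ring

lemma trace_collision_square_expansion (hρ : ρ ^ 2 = 1 - c ^ 2 * cφ ^ 2)
    (hx : x = 1 - 2 * c ^ 2 * cφ ^ 2) :
    let C := !![x, -(2 * c * cφ * ρ); -(2 * c * cφ * ρ), -x]
    let R : Matrix (Fin 2) (Fin 2) ℝ := !![1, 0; 0, -1]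
    let Θ := s • !![0, ρ; 0, -(c * cφ)]
    (1 + (C * R) ^ 2 - (2 * t * κ) • (Θ + (C * R) * (Θ * R))
      + (t ^ 2 * κ ^ 2) • (Θ * R) ^ 2).trace = (2 * x - t * κ * s * (c * cφ)) ^ 2 := by
  intro C R Θ
  have hM : C * R = !![x, 2 * c * cφ * ρ; -(2 * c * cφ * ρ), x] := collision_mul_reflection _ _
  have hΘ : Θ = !![0, s * ρ; 0, -(s * (c * cφ))] := by simp [Θ]
  have hΘR : Θ * R = !![0, -(s * ρ); 0, s * (c * cφ)] := by simp [Θ, R]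
  have h_quad : (1 + (C * R) ^ 2).trace = 4 * x ^ 2 := by
    simp only [hM, trace_add, trace_one, Fintype.card_fin, pow_two, mul_fin_two, trace_fin_two_of]
    linear_combination -2 * sq_add_sq_collision_entries c cφ ρ x hρ hx
  have h_lin : (Θ + (C * R) * (Θ * R)).trace = 2 * s * (c * cφ) * x := by
    rw [trace_add, hM, hΘR, hΘ, mul_fin_two, trace_fin_two_of, trace_fin_two_of]
    subst hx
    linear_combination 2 * s * c * cφ * hρ
  have h_free : ((Θ * R) ^ 2).trace = (s * (c * cφ)) ^ 2 := by
    simp only [hΘR, pow_two, mul_fin_two, trace_fin_two_of]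
    ring
  rw [trace_add, trace_sub, trace_smul, trace_smul, h_quad, h_lin, h_free, smul_eq_mul,
    smul_eq_mul]
  ring

end WavefrontMatrices

theorem period_two_trace_equal_curvature_square_general
    (c cφ cψ t κ d ρ x : ℝ) (ht : t * cψ = d * cφ)
    (hρ : ρ^2 = 1 - c^2 * cφ^2) (hx : x = 1 - 2*c^2*cφ^2)
    (C R Θ : Matrix (Fin 2) (Fin 2) ℝ)
    (hC : C = !![x, -(2*c*cφ*ρ); -(2*c*cφ*ρ), -x])
    (hR : R = !![1, 0; 0, -1])
    (hΘ : Θ = (2*c*(cψ/cφ)) • !![0, ρ; 0, -(c*cφ)]) :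
    (1 + (C * R)^2 - (2*t*κ) • (Θ + (C * R) * (Θ * R))
      + (t^2*κ^2) • (Θ * R)^2).trace
      = (2*x - 2*κ*c^2*cφ*d)^2 ∧
    (2*x - 2*κ*c^2*cφ*d)^2 = ((C * R + (t*κ) • Θ).trace)^2 := by
  subst hC hR hΘ
  -- when `cφ = 0` both sides vanish, since then `cψ / cφ = 0` and `t * cψ = 0`
  have h_flight : t * κ * (2 * c * (cψ / cφ)) * (c * cφ) = 2 * κ * c ^ 2 * cφ * d := by
    have : t * cψ / cφ * cφ = t * cψ := div_mul_cancel_of_imp fun h => by simp [ht, h]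
    linear_combination (2 * κ * c ^ 2) * (this.trans ht)
  rw [trace_collision_mul_reflection_add_smul, ← h_flight]
  exact ⟨trace_collision_square_expansion c cφ ρ x _ t κ hρ hx, rfl⟩

/-- In the equal-curvature case `κ̃ = κ`, with `c_φ ≠ 0`,
`t·c_ψ = d̄·c_φ`, `ρ² = 1 - c²c_φ²`, `x = 1 - 2c²c_φ²`, and the wavefront-basis
matrices `C`, `R`, `Θ` below,
`trace(I + (CR)² - 2tκ(Θ + (CR)(ΘR)) + t²κ²(ΘR)²) = (2x - 2κc²c_φ·d̄)²
 = (trace(CR + tκΘ))²`: the trace of `dT²` is the square of the trace of `R·dT`. -/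
theorem period_two_trace_equal_curvature_square
    (c cφ cψ t κ d ρ x : ℝ) (hcφ : cφ ≠ 0) (ht : t * cψ = d * cφ)
    (hρ : ρ^2 = 1 - c^2 * cφ^2) (hx : x = 1 - 2*c^2*cφ^2)
    (C R Θ : Matrix (Fin 2) (Fin 2) ℝ)
    (hC : C = !![x, -(2*c*cφ*ρ); -(2*c*cφ*ρ), -x])
    (hR : R = !![1, 0; 0, -1])
    (hΘ : Θ = (2*c*(cψ/cφ)) • !![0, ρ; 0, -(c*cφ)]) :
    (1 + (C * R)^2 - (2*t*κ) • (Θ + (C * R) * (Θ * R))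
      + (t^2*κ^2) • (Θ * R)^2).trace
      = (2*x - 2*κ*c^2*cφ*d)^2 ∧
    (2*x - 2*κ*c^2*cφ*d)^2 = ((C * R + (t*κ) • Θ).trace)^2 :=
  period_two_trace_equal_curvature_square_general c cφ cψ t κ d ρ x ht hρ hx C R Θ hC hR hΘ
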